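/- arXiv:1511.05346 — 3 statements merged into one kernel-verified Lean document; each statement's English description precedes it below -/
import Mathlib

section
/- The number of index-n sublattices of a rank-2 free abelian group (i.e., subgroups of ℤ² of index n) equals σ₁(n), the sum of the positive divisors of n. -/
/-- The subgroup of `ℤ × ℤ` generated (as an image) by `(a,0)` and `(b,d)`. -/
def Lsub (a b d : ℤ) : AddSubgroup (ℤ × ℤ) where
  carrier := {p | ∃ x y : ℤ, p.1 = a * x + b * y ∧ p.2 = d * y}
  zero_mem' := ⟨0, 0, by simp⟩
  add_mem' := by
    rintro p q ⟨x, y, h1, h2⟩ ⟨x', y', h1', h2'⟩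
    exact ⟨x + x', y + y', by simp [h1, h1']; ring, by simp [h2, h2']; ring⟩
  neg_mem' := by
    rintro p ⟨x, y, h1, h2⟩
    exact ⟨-x, -y, by simp [h1]; ring, by simp [h2]⟩

lemma mem_Lsub {a b d : ℤ} {p : ℤ × ℤ} :
    p ∈ Lsub a b d ↔ ∃ x y : ℤ, p.1 = a * x + b * y ∧ p.2 = d * y := Iff.rfl

example : True := trivial

lemma Lsub_index (a d : ℕ) (ha : 0 < a) (hd : 0 < d) (b : ℤ) :
    (Lsub (a : ℤ) b (d : ℤ)).index = a * d := by
  haveI : NeZero a := ⟨ha.ne'⟩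
  haveI : NeZero d := ⟨hd.ne'⟩
  set L := Lsub (a : ℤ) b (d : ℤ) with hL
  let g : ZMod a × ZMod d → (ℤ × ℤ) ⧸ L := fun p =>
    QuotientAddGroup.mk ((p.1.val : ℤ), (p.2.val : ℤ))
  have hval : ∀ {m : ℕ} [NeZero m] (i : ZMod m), ((i.val : ℤ)) < (m : ℤ) := by
    intro m _ i
    exact_mod_cast i.val_lt
  have hbij : Function.Bijective g := by
    constructor
    · rintro ⟨i, j⟩ ⟨i', j'⟩ hij
      have h := (QuotientAddGroup.eq (s := L)).mp hij
      obtain ⟨x, y, h1, h2⟩ := h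
      simp only [Prod.fst_add, Prod.snd_add, Prod.fst_neg, Prod.snd_neg] at h1 h2
      have hy : y = 0 := by
        have hdvd : (d : ℤ) ∣ (-(j.val : ℤ) + (j'.val : ℤ)) := ⟨y, h2⟩
        have habs : |(-(j.val : ℤ) + (j'.val : ℤ))| < (d : ℤ) := by
          rw [abs_lt]
          constructor <;> [nlinarith [hval j, hval j', Int.natCast_nonneg j.val, Int.natCast_nonneg j'.val];
            nlinarith [hval j, hval j', Int.natCast_nonneg j.val, Int.natCast_nonneg j'.val]]
        have := Int.eq_zero_of_abs_lt_dvd hdvd habs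
        rw [this] at h2
        exact by
          rcases mul_eq_zero.mp h2.symm with h | h
          · exact absurd h (by exact_mod_cast hd.ne')
          · exact h
      have hj : j = j' := by
        have : (-(j.val : ℤ) + (j'.val : ℤ)) = 0 := by rw [h2, hy, mul_zero]
        have : (j.val : ℤ) = (j'.val : ℤ) := by linarith
        have : j.val = j'.val := by exact_mod_cast this
        exact ZMod.val_injective _ this
      have hx : x = 0 := by
        have hdvd : (a : ℤ) ∣ (-(i.val : ℤ) + (i'.val : ℤ)) := ⟨x, by rw [h1, hy]; ring⟩
        have habs : |(-(i.val : ℤ) + (i'.val : ℤ))| < (a : ℤ) := by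
          rw [abs_lt]
          constructor <;>
            nlinarith [hval i, hval i', Int.natCast_nonneg i.val, Int.natCast_nonneg i'.val]
        have h0 := Int.eq_zero_of_abs_lt_dvd hdvd habs
        rw [h0, hy] at h1
        have : (a : ℤ) * x = 0 := by linarith
        rcases mul_eq_zero.mp this with h | h
        · exact absurd h (by exact_mod_cast ha.ne')
        · exact h
      have hi : i = i' := by
        have h0 : (-(i.val : ℤ) + (i'.val : ℤ)) = 0 := by rw [h1, hx, hy]; ring
        have h0' : (i.val : ℤ) = (i'.val : ℤ) := by linarith
        exact ZMod.val_injective _ (by exact_mod_cast h0')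
      rw [hi, hj]
    · intro z
      obtain ⟨⟨u, v⟩, rfl⟩ := QuotientAddGroup.mk_surjective z
      have ha' : (0:ℤ) < (a:ℤ) := by exact_mod_cast ha
      have hd' : (0:ℤ) < (d:ℤ) := by exact_mod_cast hd
      refine ⟨((((u - b * (v / (d:ℤ))) % (a:ℤ)) : ZMod a), ((v % (d:ℤ)) : ZMod d)), ?_⟩
      have hu₀val : ((ZMod.val (((u - b * (v / (d:ℤ))) % (a:ℤ) : ℤ) : ZMod a) : ℤ))
          = (u - b * (v / (d:ℤ))) % (a:ℤ) := by
        rw [ZMod.val_intCast]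
        exact Int.emod_emod_of_dvd _ dvd_rfl
      have hv₀val : ((ZMod.val ((v % (d:ℤ) : ℤ) : ZMod d) : ℤ)) = v % (d:ℤ) := by
        rw [ZMod.val_intCast]
        exact Int.emod_emod_of_dvd _ dvd_rfl
      show QuotientAddGroup.mk _ = _
      rw [QuotientAddGroup.eq]
      refine ⟨(u - b * (v / (d:ℤ))) / (a:ℤ), v / (d:ℤ), ?_, ?_⟩
      · simp only [Prod.fst_add, Prod.fst_neg]
        rw [hu₀val]
        have h1 := Int.mul_ediv_add_emod (u - b * (v / (d:ℤ))) (a : ℤ)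
        linarith
      · simp only [Prod.snd_add, Prod.snd_neg]
        rw [hv₀val]
        have h2 := Int.mul_ediv_add_emod v (d : ℤ)
        linarith
  have : (L.index : ℕ) = Nat.card ((ℤ × ℤ) ⧸ L) := rfl
  rw [this, ← Nat.card_eq_of_bijective g hbij, Nat.card_prod, Nat.card_zmod, Nat.card_zmod]

lemma fst_axis_mem_Lsub {a b d t : ℤ} (hd : d ≠ 0) :
    (t, (0:ℤ)) ∈ Lsub a b d ↔ a ∣ t := by
  constructor
  · rintro ⟨x, y, h1, h2⟩
    simp only at h1 h2
    have hy : y = 0 := by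
      rcases mul_eq_zero.mp h2.symm with h | h
      · exact absurd h hd
      · exact h
    exact ⟨x, by rw [h1, hy]; ring⟩
  · rintro ⟨x, rfl⟩
    exact ⟨x, 0, by simp, by simp⟩

lemma gen_mem_Lsub (a b d : ℤ) : ((b, d) : ℤ × ℤ) ∈ Lsub a b d :=
  ⟨0, 1, by simp, by simp⟩

lemma gen1_mem_Lsub (a b d : ℤ) : ((a, (0:ℤ)) : ℤ × ℤ) ∈ Lsub a b d :=
  ⟨1, 0, by simp, by simp⟩

lemma snd_dvd_of_mem_Lsub {a b d : ℤ} {p : ℤ × ℤ} (hp : p ∈ Lsub a b d) : d ∣ p.2 := by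
  obtain ⟨x, y, _, h2⟩ := hp
  exact ⟨y, h2⟩

lemma Lsub_inj {a a' d d' : ℕ} {b b' : ℤ} (ha : 0 < a) (hd : 0 < d)
    (ha' : 0 < a') (hd' : 0 < d') (hb0 : 0 ≤ b) (hb : b < a) (hb0' : 0 ≤ b')
    (hb' : b' < a') (h : Lsub (a:ℤ) b (d:ℤ) = Lsub (a':ℤ) b' (d':ℤ)) :
    a = a' ∧ d = d' ∧ b = b' := by
  have haz : ((a:ℤ)) ≠ 0 := by exact_mod_cast ha.ne'
  have hdz : ((d:ℤ)) ≠ 0 := by exact_mod_cast hd.ne'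
  have haz' : ((a':ℤ)) ≠ 0 := by exact_mod_cast ha'.ne'
  have hdz' : ((d':ℤ)) ≠ 0 := by exact_mod_cast hd'.ne'
  have hdd : d = d' := by
    have h1 : ((d':ℤ)) ∣ (d:ℤ) := by
      have := gen_mem_Lsub (a:ℤ) b (d:ℤ)
      rw [h] at this
      exact snd_dvd_of_mem_Lsub this
    have h2 : ((d:ℤ)) ∣ (d':ℤ) := by
      have := gen_mem_Lsub (a':ℤ) b' (d':ℤ)
      rw [← h] at this
      exact snd_dvd_of_mem_Lsub this
    exact Nat.dvd_antisymm (by exact_mod_cast h2) (by exact_mod_cast h1)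
  have haa : a = a' := by
    have h1 : ((a':ℤ)) ∣ (a:ℤ) := by
      have := gen1_mem_Lsub (a:ℤ) b (d:ℤ)
      rw [h] at this
      exact (fst_axis_mem_Lsub hdz').mp this
    have h2 : ((a:ℤ)) ∣ (a':ℤ) := by
      have := gen1_mem_Lsub (a':ℤ) b' (d':ℤ)
      rw [← h] at this
      exact (fst_axis_mem_Lsub hdz).mp this
    exact Nat.dvd_antisymm (by exact_mod_cast h2) (by exact_mod_cast h1)
  refine ⟨haa, hdd, ?_⟩
  have := gen_mem_Lsub (a:ℤ) b (d:ℤ)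
  rw [h] at this
  obtain ⟨x, y, h1, h2⟩ := this
  simp only at h1 h2
  subst hdd
  have hy : y = 1 := by
    have : (d:ℤ) * 1 = (d:ℤ) * y := by rw [mul_one]; exact h2
    exact (mul_left_cancel₀ hdz this).symm
  rw [hy, mul_one] at h1
  subst haa
  have hx : x = 0 := by nlinarith
  rw [hx, mul_zero, zero_add] at h1
  exact h1

lemma exists_Lsub_rep (M : AddSubgroup (ℤ × ℤ)) (n : ℕ) (hn : 0 < n)
    (h : M.index = n) :
    ∃ a d : ℕ, ∃ b : ℤ, 0 < a ∧ 0 < d ∧ 0 ≤ b ∧ b < a ∧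
      M = Lsub (a:ℤ) b (d:ℤ) := by
  have hnsmul : ∀ g : ℤ × ℤ, (n : ℤ) • g ∈ M := by
    intro g
    have := AddSubgroup.nsmul_index_mem M g
    rw [h] at this
    exact_mod_cast (by exact_mod_cast this : (n:ℤ) • g ∈ M)
  -- the subgroup of second coordinates
  obtain ⟨c, hc⟩ := Int.subgroup_cyclic (M.map (AddMonoidHom.snd ℤ ℤ))
  have hcmem : ∀ v : ℤ, (∃ u : ℤ, (u, v) ∈ M) ↔ c ∣ v := by
    intro v
    rw [← Int.mem_zmultiples_iff, AddSubgroup.zmultiples_eq_closure, ← hc]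
    constructor
    · rintro ⟨u, hu⟩
      exact ⟨(u, v), hu, rfl⟩
    · rintro ⟨⟨u, v'⟩, hp, hv⟩
      exact ⟨u, by simpa [show v' = v from hv] using hp⟩
  -- the subgroup of first-axis elements
  obtain ⟨e, he⟩ := Int.subgroup_cyclic (M.comap (AddMonoidHom.inl ℤ ℤ))
  have hemem : ∀ t : ℤ, (t, (0:ℤ)) ∈ M ↔ e ∣ t := by
    intro t
    rw [← Int.mem_zmultiples_iff, AddSubgroup.zmultiples_eq_closure, ← he]
    rfl
  have hc0 : c ≠ 0 := by
    intro h0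
    have : ∃ u : ℤ, (u, (n:ℤ)) ∈ M := ⟨0, by simpa using hnsmul (0, 1)⟩
    rw [hcmem, h0] at this
    exact (by exact_mod_cast hn.ne' : ((n:ℤ)) ≠ 0) (zero_dvd_iff.mp this)
  have he0 : e ≠ 0 := by
    intro h0
    have : ((n:ℤ), (0:ℤ)) ∈ M := by simpa using hnsmul (1, 0)
    rw [hemem, h0] at this
    exact (by exact_mod_cast hn.ne' : ((n:ℤ)) ≠ 0) (zero_dvd_iff.mp this)
  set a : ℕ := e.natAbs with haa
  set d : ℕ := c.natAbs with hdd
  have ha : 0 < a := Int.natAbs_pos.mpr he0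
  have hd : 0 < d := Int.natAbs_pos.mpr hc0
  have hamem : ∀ t : ℤ, (t, (0:ℤ)) ∈ M ↔ (a:ℤ) ∣ t := by
    intro t; rw [hemem, haa, Int.natAbs_dvd]
  have hdm : ∀ v : ℤ, (∃ u : ℤ, (u, v) ∈ M) ↔ (d:ℤ) ∣ v := by
    intro v; rw [hcmem, hdd, Int.natAbs_dvd]
  obtain ⟨b0, hb0mem⟩ := (hdm (d:ℤ)).mpr dvd_rfl
  set b : ℤ := b0 % (a:ℤ) with hbb
  have haz : (0:ℤ) < (a:ℤ) := by exact_mod_cast ha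
  have hbmem : (b, (d:ℤ)) ∈ M := by
    have h1 : ((a:ℤ) * (b0 / (a:ℤ)), (0:ℤ)) ∈ M := (hamem _).mpr ⟨_, rfl⟩
    have h2 := M.sub_mem hb0mem h1
    have : b0 - (a:ℤ) * (b0 / (a:ℤ)) = b := by
      rw [hbb]
      have := Int.mul_ediv_add_emod b0 (a:ℤ)
      linarith
    simpa [Prod.ext_iff, this] using h2
  refine ⟨a, d, b, ha, hd, Int.emod_nonneg _ haz.ne', Int.emod_lt_of_pos _ haz, ?_⟩
  ext ⟨u, v⟩
  constructor
  · intro huv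
    have hv : (d:ℤ) ∣ v := (hdm v).mp ⟨u, huv⟩
    obtain ⟨y, rfl⟩ := hv
    have h1 : (u - b * y, (0:ℤ)) ∈ M := by
      have := M.sub_mem huv (M.zsmul_mem hbmem y)
      simpa [Prod.ext_iff, smul_eq_mul, mul_comm] using this
    obtain ⟨x, hx⟩ := (hamem _).mp h1
    exact ⟨x, y, by linarith, rfl⟩
  · rintro ⟨x, y, h1, h2⟩
    simp only at h1 h2
    have : ((u, v) : ℤ × ℤ) = x • ((a:ℤ), (0:ℤ)) + y • (b, (d:ℤ)) := by
      simp [Prod.ext_iff, smul_eq_mul, h1, h2]; constructor <;> ring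
    rw [this]
    exact M.add_mem (M.zsmul_mem ((hamem _).mpr dvd_rfl) x) (M.zsmul_mem hbmem y)

/-- The number of index-`n` subgroups of `ℤ²` equals `σ₁(n)`,
the sum of the positive divisors of `n`. -/
theorem sublattice_count (n : ℕ) (hn : 0 < n) :
    Nat.card {M : AddSubgroup (ℤ × ℤ) // M.index = n} =
      ArithmeticFunction.sigma 1 n := by
  classical
  set T := {x : ℕ × ℕ × ℕ // x.1 * x.2.1 = n ∧ x.2.2 < x.1} with hT
  have hpos : ∀ x : T, 0 < x.1.1 ∧ 0 < x.1.2.1 := by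
    rintro ⟨⟨a, d, b⟩, h1, h2⟩
    simp only at h1 h2 ⊢
    constructor
    · rcases Nat.eq_zero_or_pos a with h0 | h0
      · subst h0; omega
      · exact h0
    · rcases Nat.eq_zero_or_pos d with h0 | h0
      · subst h0; simp at h1; omega
      · exact h0
  let f : T → {M : AddSubgroup (ℤ × ℤ) // M.index = n} := fun x =>
    ⟨Lsub (x.1.1 : ℤ) (x.1.2.2 : ℤ) (x.1.2.1 : ℤ), by
      rw [Lsub_index _ _ (hpos x).1 (hpos x).2]
      exact x.2.1⟩
  have hbij : Function.Bijective f := by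
    constructor
    · rintro x y hxy
      have hx := hpos x; have hy := hpos y
      have heq : Lsub (x.1.1 : ℤ) (x.1.2.2 : ℤ) (x.1.2.1 : ℤ)
          = Lsub (y.1.1 : ℤ) (y.1.2.2 : ℤ) (y.1.2.1 : ℤ) := congrArg Subtype.val hxy
      obtain ⟨h1, h2, h3⟩ := Lsub_inj hx.1 hx.2 hy.1 hy.2
        (Int.natCast_nonneg _) (by exact_mod_cast x.2.2)
        (Int.natCast_nonneg _) (by exact_mod_cast y.2.2) heq
      apply Subtype.ext
      have h3' : x.1.2.2 = y.1.2.2 := by exact_mod_cast h3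
      exact Prod.ext h1 (Prod.ext h2 h3')
    · rintro ⟨M, hM⟩
      obtain ⟨a, d, b, ha, hd, hb0, hb, hMeq⟩ := exists_Lsub_rep M n hn hM
      have hbt : ((b.toNat : ℤ)) = b := Int.toNat_of_nonneg hb0
      have had : a * d = n := by
        rw [hMeq, Lsub_index _ _ ha hd] at hM
        exact hM
      have hblt : b.toNat < a := by
        have : ((b.toNat : ℤ)) < (a : ℤ) := by rw [hbt]; exact hb
        exact_mod_cast this
      refine ⟨⟨(a, d, b.toNat), had, hblt⟩, ?_⟩
      apply Subtype.ext
      show Lsub _ _ _ = M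
      rw [hMeq, hbt]
  rw [← Nat.card_eq_of_bijective f hbij]
  -- now count T
  let E : T ≃ (Σ p : n.divisorsAntidiagonal, Fin p.1.1) :=
    { toFun := fun x => ⟨⟨(x.1.1, x.1.2.1),
        Nat.mem_divisorsAntidiagonal.mpr ⟨x.2.1, hn.ne'⟩⟩, ⟨x.1.2.2, x.2.2⟩⟩
      invFun := fun y => ⟨(y.1.1.1, y.1.1.2, y.2.1),
        (Nat.mem_divisorsAntidiagonal.mp y.1.2).1, y.2.2⟩
      left_inv := fun x => rfl
      right_inv := fun y => rfl }
  rw [Nat.card_congr E, Nat.card_eq_fintype_card, Fintype.card_sigma]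
  simp only [Fintype.card_fin]
  rw [ArithmeticFunction.sigma_one_apply, ← Nat.sum_divisorsAntidiagonal (fun a _ => a)]
  exact Finset.sum_coe_sort _ _
end

section
/- A subgroup M of the Eisenstein-type lattice ℤ[ε], where ε = exp(iπ/3), satisfies ε·M = M if and only if M = e·ℤ[ε] for some e ∈ ℤ[ε]. -/
open Complex in
/-- `ε = exp(iπ/3)`. -/
noncomputable def eps : ℂ := Complex.exp (Real.pi * Complex.I / 3)

/-- The lattice `ℤ[ε] = {p + qε : p, q ∈ ℤ}` as an additive subgroup of `ℂ`. -/
noncomputable def Zeps : AddSubgroup ℂ := AddSubgroup.closure {1, eps}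

/-!
Multiplication by `ε` generates the action of the ring `ℤ[ε]`, so `ε·M = M` says exactly that `M`
is an ideal of `ℤ[ε]` (`ε` is a unit, `ε⁻¹ = 1 - ε`). Ideals of `ℤ[ε]` are principal because
`ℤ[ε]` is Euclidean for the norm `|p + qε|² = p² + pq + q²`: every point of `ℂ` lies at distance
`< 1` from the lattice, so a nonzero element of minimal norm in `M` divides every element of `M`.
-/

open Complex

lemma eps_eq : eps = (1 / 2 : ℝ) + (Real.sqrt 3 / 2 : ℝ) * I := by
  rw [eps, show (Real.pi : ℂ) * I / 3 = (Real.pi / 3 : ℝ) * I by push_cast; ring, exp_mul_I,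
    ← ofReal_cos, ← ofReal_sin, Real.cos_pi_div_three, Real.sin_pi_div_three]

lemma eps_re : eps.re = 1 / 2 := by simp [eps_eq]

lemma eps_im : eps.im = Real.sqrt 3 / 2 := by simp [eps_eq]

lemma eps_sq : eps ^ 2 = eps - 1 := by
  have h3 : ((Real.sqrt 3 : ℝ) : ℂ) ^ 2 = 3 := by exact_mod_cast Real.sq_sqrt (by norm_num)
  rw [eps_eq]
  push_cast
  linear_combination ((Real.sqrt 3 : ℂ) ^ 2 / 4) * I_sq - h3 / 4

lemma normSq_add_mul_eps (s t : ℝ) : normSq (s + t * eps) = s ^ 2 + s * t + t ^ 2 := by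
  have h3 : Real.sqrt 3 ^ 2 = 3 := Real.sq_sqrt (by norm_num)
  simp only [normSq_apply, add_re, add_im, mul_re, mul_im, ofReal_re, ofReal_im, eps_re, eps_im]
  linear_combination t ^ 2 / 4 * h3

lemma exists_eq_add_mul_eps (w : ℂ) : ∃ s t : ℝ, w = s + t * eps := by
  have h3 : Real.sqrt 3 ≠ 0 := by positivity
  refine ⟨w.re - w.im / Real.sqrt 3, 2 * w.im / Real.sqrt 3, Complex.ext ?_ ?_⟩
  · simp [eps_re, eps_im]
    ring
  · simp [eps_re, eps_im]
    field_simp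

lemma mem_Zeps_iff {z : ℂ} : z ∈ Zeps ↔ ∃ p q : ℤ, (p : ℂ) + q * eps = z := by
  simp [Zeps, AddSubgroup.mem_closure_pair, zsmul_eq_mul]

lemma one_mem_Zeps : (1 : ℂ) ∈ Zeps := AddSubgroup.subset_closure (by simp)

lemma eps_mem_Zeps : eps ∈ Zeps := AddSubgroup.subset_closure (by simp)

lemma mul_mem_of_eps_mul_mem {M : AddSubgroup ℂ} (hM : ∀ m ∈ M, eps * m ∈ M) {q m : ℂ}
    (hq : q ∈ Zeps) (hm : m ∈ M) : q * m ∈ M := by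
  induction hq using AddSubgroup.closure_induction with
  | mem x hx =>
    rcases hx with rfl | rfl
    · simpa using hm
    · exact hM m hm
  | zero => simp
  | add x y _ _ hx hy => simpa [add_mul] using M.add_mem hx hy
  | neg x _ hx => simpa [neg_mul] using M.neg_mem hx

lemma eps_mul_mem_Zeps {z : ℂ} (hz : z ∈ Zeps) : eps * z ∈ Zeps := by
  induction hz using AddSubgroup.closure_induction with
  | mem x hx =>
    rcases hx with rfl | rfl
    · simpa using eps_mem_Zeps
    · rw [← sq, eps_sq]
      exact Zeps.sub_mem eps_mem_Zeps one_mem_Zeps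
  | zero => simp
  | add x y _ _ hx hy => simpa [mul_add] using Zeps.add_mem hx hy
  | neg x _ hx => simpa [mul_neg] using Zeps.neg_mem hx

lemma mul_mem_Zeps {z w : ℂ} (hz : z ∈ Zeps) (hw : w ∈ Zeps) : z * w ∈ Zeps :=
  mul_mem_of_eps_mul_mem (fun _ ↦ eps_mul_mem_Zeps) hz hw

lemma map_mulLeft_eps_eq_iff (M : AddSubgroup ℂ) :
    M.map (AddMonoidHom.mulLeft eps) = M ↔ ∀ q ∈ Zeps, ∀ m ∈ M, q * m ∈ M := by
  constructor
  · intro h q hq m hm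
    refine mul_mem_of_eps_mul_mem (fun m hm ↦ ?_) hq hm
    exact h ▸ AddSubgroup.mem_map_of_mem _ hm
  · intro h
    refine le_antisymm (AddSubgroup.map_le_iff_le_comap.mpr fun m hm ↦ h _ eps_mem_Zeps _ hm)
      fun m hm ↦ ⟨(1 - eps) * m, h _ (Zeps.sub_mem one_mem_Zeps eps_mem_Zeps) _ hm, ?_⟩
    show eps * ((1 - eps) * m) = m
    linear_combination -m * eps_sq

lemma exists_normSq_sub_lt_one (w : ℂ) : ∃ q ∈ Zeps, normSq (w - q) < 1 := by
  obtain ⟨s, t, rfl⟩ := exists_eq_add_mul_eps w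
  refine ⟨round s + round t * eps, mem_Zeps_iff.mpr ⟨round s, round t, by ring⟩, ?_⟩
  have hs := abs_sub_round s
  have ht := abs_sub_round t
  have h : (s : ℂ) + t * eps - (round s + round t * eps) =
      ((s - round s : ℝ) : ℂ) + ((t - round t : ℝ) : ℂ) * eps := by push_cast; ring
  rw [h, normSq_add_mul_eps]
  nlinarith [abs_le.mp hs, abs_le.mp ht]

lemma exists_normSq_eq_natCast {z : ℂ} (hz : z ∈ Zeps) : ∃ n : ℕ, normSq z = n := by
  obtain ⟨p, q, rfl⟩ := mem_Zeps_iff.mp hz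
  have h := normSq_add_mul_eps p q
  push_cast at h
  have hnonneg : 0 ≤ p ^ 2 + p * q + q ^ 2 := by nlinarith [sq_nonneg (p + q)]
  exact ⟨(p ^ 2 + p * q + q ^ 2).toNat, by rw [h]; exact_mod_cast (Int.toNat_of_nonneg hnonneg).symm⟩

lemma exists_normSq_min {S : Set ℂ} (hS : S ⊆ Zeps) {m₀ : ℂ} (hm₀ : m₀ ∈ S)
    (hm₀0 : m₀ ≠ 0) : ∃ e ∈ S, e ≠ 0 ∧ ∀ m ∈ S, m ≠ 0 → normSq e ≤ normSq m := by
  classical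
  have hex : ∃ n : ℕ, ∃ m ∈ S, m ≠ 0 ∧ normSq m = n := by
    obtain ⟨n, hn⟩ := exists_normSq_eq_natCast (hS hm₀)
    exact ⟨n, m₀, hm₀, hm₀0, hn⟩
  obtain ⟨e, he, he0, hen⟩ := Nat.find_spec hex
  refine ⟨e, he, he0, fun m hm hm0 ↦ ?_⟩
  obtain ⟨k, hk⟩ := exists_normSq_eq_natCast (hS hm)
  rw [hen, hk]
  exact_mod_cast Nat.find_min' hex ⟨m, hm, hm0, hk⟩

lemma coe_eq_image_mul_of_normSq_min {M : AddSubgroup ℂ} (hmul : ∀ q ∈ Zeps, ∀ m ∈ M, q * m ∈ M)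
    {e : ℂ} (he : e ∈ M) (he0 : e ≠ 0) (hmin : ∀ m ∈ M, m ≠ 0 → normSq e ≤ normSq m) :
    (M : Set ℂ) = (fun z ↦ e * z) '' (Zeps : Set ℂ) := by
  ext x
  constructor
  · intro hx
    obtain ⟨q, hq, hlt⟩ := exists_normSq_sub_lt_one (x / e)
    have hr : x - q * e ∈ M := M.sub_mem hx (hmul q hq e he)
    have hr_lt : normSq (x - q * e) < normSq e := by
      calc normSq (x - q * e) = normSq e * normSq (x / e - q) := by
            rw [← normSq_mul, mul_sub, mul_div_cancel₀ x he0, mul_comm]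
        _ < normSq e * 1 := mul_lt_mul_of_pos_left hlt (normSq_pos.mpr he0)
        _ = normSq e := mul_one _
    have hr0 : x - q * e = 0 := by
      by_contra hr0
      exact (hmin _ hr hr0).not_gt hr_lt
    exact ⟨q, hq, by linear_combination -hr0⟩
  · rintro ⟨z, hz, rfl⟩
    simpa only [SetLike.mem_coe, mul_comm z e] using hmul z hz e he

lemma exists_coe_eq_image_mul {M : AddSubgroup ℂ} (hM : M ≤ Zeps)
    (hmul : ∀ q ∈ Zeps, ∀ m ∈ M, q * m ∈ M) :
    ∃ e ∈ Zeps, (M : Set ℂ) = (fun z ↦ e * z) '' (Zeps : Set ℂ) := by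
  rcases M.bot_or_exists_ne_zero with rfl | ⟨m₀, hm₀, hm₀0⟩
  · refine ⟨0, Zeps.zero_mem, ?_⟩
    simp [Set.Nonempty.image_const ⟨0, Zeps.zero_mem⟩]
  · obtain ⟨e, he, he0, hmin⟩ := exists_normSq_min hM hm₀ hm₀0
    exact ⟨e, hM he, coe_eq_image_mul_of_normSq_min hmul he he0 hmin⟩

/-- An additive subgroup `M` of `ℤ[ε]` satisfies `ε·M = M` iff `M = e·ℤ[ε]`
for some `e ∈ ℤ[ε]`. -/
theorem eps_invariant_iff_principal (M : AddSubgroup ℂ) (hM : M ≤ Zeps) :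
    AddSubgroup.map (AddMonoidHom.mulLeft eps) M = M ↔
      ∃ e ∈ Zeps, (M : Set ℂ) = (fun z => e * z) '' (Zeps : Set ℂ) := by
  rw [map_mulLeft_eps_eq_iff]
  refine ⟨exists_coe_eq_image_mul hM, ?_⟩
  rintro ⟨e, -, hMe⟩ q hq m hm
  rw [← SetLike.mem_coe, hMe] at hm ⊢
  obtain ⟨z, hz, rfl⟩ := hm
  exact ⟨q * z, mul_mem_Zeps hq hz, by ring⟩
end

section
/- For every positive integer n, σ₁(n) + S₂(n) is even, where S₂(n) is the number of ordered integer pairs (p, q) with p > 0, q ≥ 0, p² + q² = n. -/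
/-!
Both `σ₁(n)` and `S₂(n)` are odd exactly when `n` is a square or twice a square.

Modulo 2 only the odd divisors contribute to `σ₁(n)`, and they are the divisors of the odd part `m`
of `n`; pairing `d` with `m / d` shows that `m` has an odd number of divisors iff `m` is a square,
i.e. iff `n = a²` or `n = 2a²`.

For `S₂(n)`, the swap `(p, q) ↦ (q, p)` on the solutions of `p² + q² = n` in `ℕ²` has a fixed point,
necessarily unique, iff `n = 2a²`; the solutions with `p = 0`, excluded from `S₂(n)`, contribute one
more exactly when `n` is a square. For `n ≠ 0` the two cases exclude each other.
-/

/-- `S₂(n)`: the number of ordered integer pairs `(p, q)` with `p > 0`, `q ≥ 0`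
and `p² + q² = n`. -/
noncomputable def S2 (n : ℕ) : ℕ :=
  Nat.card {pq : ℤ × ℤ // 0 < pq.1 ∧ 0 ≤ pq.2 ∧ pq.1 ^ 2 + pq.2 ^ 2 = n}

open Finset

namespace Finset

theorem odd_card_iff_nonempty {α : Type*} {s : Finset α} (hs : #s ≤ 1) : Odd #s ↔ s.Nonempty := by
  rw [← card_pos]
  interval_cases #s <;> decide

variable {α : Type*} [DecidableEq α]

theorem even_card_filter_ne_of_involution (s : Finset α) {f : α → α}
    (hmaps : ∀ a ∈ s, f a ∈ s) (hinv : ∀ a ∈ s, f (f a) = a) : Even #{a ∈ s | f a ≠ a} := by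
  have hsum : ∑ _a ∈ {a ∈ s | f a ≠ a}, (1 : ZMod 2) = 0 := by
    refine sum_involution (fun a _ => f a) (fun _ _ => by decide) (fun a ha _ => (mem_filter.mp ha).2)
      (fun a ha => ?_) (fun a ha => hinv a (mem_filter.mp ha).1)
    obtain ⟨has, hne⟩ := mem_filter.mp ha
    exact mem_filter.mpr ⟨hmaps a has, by rw [hinv a has]; exact hne.symm⟩
  simpa [ZMod.natCast_eq_zero_iff_even] using hsum

theorem odd_card_iff_exists_fixed_of_involution {s : Finset α} {f : α → α}
    (hmaps : ∀ a ∈ s, f a ∈ s) (hinv : ∀ a ∈ s, f (f a) = a)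
    (hfix : ∀ a ∈ s, ∀ b ∈ s, f a = a → f b = b → a = b) :
    Odd #s ↔ ∃ a ∈ s, f a = a := by
  have hfixed_le : #{a ∈ s | f a = a} ≤ 1 := card_le_one.mpr fun a ha b hb =>
    hfix a (mem_filter.mp ha).1 b (mem_filter.mp hb).1 (mem_filter.mp ha).2 (mem_filter.mp hb).2
  rw [← card_filter_add_card_filter_not (fun a => f a = a), Nat.odd_add,
    odd_card_iff_nonempty hfixed_le, filter_nonempty_iff]
  simp only [even_card_filter_ne_of_involution s hmaps hinv, iff_true]

end Finset

namespace Nat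

theorem odd_card_divisors_iff {m : ℕ} (hm : m ≠ 0) : Odd #m.divisors ↔ IsSquare m := by
  have hfix : ∀ d ∈ m.divisors, m / d = d ↔ m = d * d := fun d hd =>
    Nat.div_eq_iff_eq_mul_left (pos_of_mem_divisors hd) (dvd_of_mem_divisors hd)
  rw [odd_card_iff_exists_fixed_of_involution (f := (m / ·))]
  · constructor
    · rintro ⟨d, hd, hdd⟩
      exact ⟨d, (hfix d hd).mp hdd⟩
    · rintro ⟨d, rfl⟩
      have hd : d ∈ (d * d).divisors := mem_divisors.mpr ⟨dvd_mul_right d d, hm⟩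
      exact ⟨d, hd, (hfix d hd).mpr rfl⟩
  · exact fun d hd => mem_divisors.mpr ⟨div_dvd_of_dvd (dvd_of_mem_divisors hd), hm⟩
  · exact fun d hd => Nat.div_div_self (dvd_of_mem_divisors hd) hm
  · intro d hd e he hdd hee
    exact mul_self_inj.mp (((hfix d hd).mp hdd).symm.trans ((hfix e he).mp hee))

theorem filter_odd_divisors {n : ℕ} (hn : n ≠ 0) :
    {d ∈ n.divisors | Odd d} = (ordCompl[2] n).divisors := by
  ext d
  simp only [mem_filter, mem_divisors, ne_eq, (ordCompl_pos 2 hn).ne', not_false_eq_true, and_true, hn]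
  constructor
  · rintro ⟨hdn, hodd⟩
    exact dvd_ordCompl_of_dvd_not_dvd hdn (by simpa [← even_iff_two_dvd] using hodd)
  · intro hd
    refine ⟨hd.trans (ordCompl_dvd n 2), ?_⟩
    rw [← not_even_iff_odd, even_iff_two_dvd]
    exact fun h2 => not_dvd_ordCompl prime_two hn (h2.trans hd)

theorem odd_sigma_one_iff {n : ℕ} (hn : n ≠ 0) :
    Odd (ArithmeticFunction.sigma 1 n) ↔ IsSquare (ordCompl[2] n) := by
  rw [ArithmeticFunction.sigma_one_apply, odd_sum_iff_odd_card_odd, filter_odd_divisors hn,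
    odd_card_divisors_iff (ordCompl_pos 2 hn).ne']

theorem isSquare_ordCompl_two_iff {n : ℕ} (hn : n ≠ 0) :
    IsSquare (ordCompl[2] n) ↔ IsSquare n ∨ ∃ a, n = 2 * a ^ 2 := by
  constructor
  · rintro ⟨t, ht⟩
    have hn' : n = 2 ^ n.factorization 2 * (t * t) := by
      rw [← ht, ordProj_mul_ordCompl_eq_self]
    rcases even_or_odd (n.factorization 2) with ⟨j, hj⟩ | ⟨j, hj⟩
    · exact Or.inl ⟨2 ^ j * t, by rw [hn', hj]; ring⟩
    · exact Or.inr ⟨2 ^ j * t, by rw [hn', hj]; ring⟩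
  · rintro (⟨s, rfl⟩ | ⟨a, rfl⟩)
    · exact ⟨ordCompl[2] s, ordCompl_mul s s 2⟩
    · rw [show 2 * a ^ 2 = 2 ^ 1 * (a * a) by ring, ordCompl_self_pow_mul _ _ prime_two,
        ordCompl_mul]
      exact ⟨_, rfl⟩

theorem ne_two_mul_sq_of_isSquare {n : ℕ} (hn : n ≠ 0) (h : IsSquare n) (a : ℕ) :
    n ≠ 2 * a ^ 2 := by
  obtain ⟨s, rfl⟩ := h
  intro hs
  have hs0 : s ≠ 0 := by rintro rfl; exact hn rfl
  have ha0 : a ≠ 0 := by rintro rfl; exact hn (by simpa using hs)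
  have hv := congrArg (padicValNat 2) hs
  rw [padicValNat.mul hs0 hs0, padicValNat.mul two_ne_zero (pow_ne_zero 2 ha0), padicValNat.pow _ _,
    padicValNat_self] at hv
  omega

end Nat

def twoSquareReps (n : ℕ) : Finset (ℕ × ℕ) :=
  {pq ∈ range (n + 1) ×ˢ range (n + 1) | pq.1 ^ 2 + pq.2 ^ 2 = n}

theorem mem_twoSquareReps {n : ℕ} {pq : ℕ × ℕ} :
    pq ∈ twoSquareReps n ↔ pq.1 ^ 2 + pq.2 ^ 2 = n := by
  have h1 : pq.1 ≤ pq.1 ^ 2 := Nat.le_self_pow two_ne_zero _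
  have h2 : pq.2 ≤ pq.2 ^ 2 := Nat.le_self_pow two_ne_zero _
  simp only [twoSquareReps, mem_filter, mem_product, mem_range, and_iff_right_iff_imp]
  omega

theorem S2_eq_card_filter (n : ℕ) : S2 n = #{pq ∈ twoSquareReps n | 0 < pq.1} := by
  rw [S2, Nat.subtype_card (({pq ∈ twoSquareReps n | 0 < pq.1}).image (Prod.map Nat.cast Nat.cast)),
    card_image_of_injective _ (Nat.cast_injective.prodMap Nat.cast_injective)]
  rintro ⟨p, q⟩
  simp only [mem_image, mem_filter, mem_twoSquareReps, Prod.exists, Prod.map, Prod.mk.injEq]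
  constructor
  · rintro ⟨a, b, ⟨hab, ha⟩, rfl, rfl⟩
    exact ⟨by exact_mod_cast ha, by positivity, by exact_mod_cast hab⟩
  · rintro ⟨hp, hq, hpq⟩
    lift p to ℕ using hp.le
    lift q to ℕ using hq
    exact ⟨p, q, ⟨by exact_mod_cast hpq, by exact_mod_cast hp⟩, rfl, rfl⟩

theorem odd_card_twoSquareReps_iff (n : ℕ) : Odd #(twoSquareReps n) ↔ ∃ a, n = 2 * a ^ 2 := by
  rw [odd_card_iff_exists_fixed_of_involution (f := Prod.swap)]
  · constructor
    · rintro ⟨⟨p, q⟩, hpq, hswap⟩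
      obtain rfl : q = p := congrArg Prod.fst hswap
      exact ⟨q, by rw [← mem_twoSquareReps.mp hpq]; ring⟩
    · rintro ⟨a, rfl⟩
      exact ⟨(a, a), mem_twoSquareReps.mpr (by ring), rfl⟩
  · simp only [mem_twoSquareReps, Prod.fst_swap, Prod.snd_swap]
    intro pq h; omega
  · exact fun pq _ => pq.swap_swap
  · rintro ⟨p, q⟩ hpq ⟨r, s⟩ hrs hpq_fix hrs_fix
    obtain rfl : q = p := congrArg Prod.fst hpq_fix
    obtain rfl : s = r := congrArg Prod.fst hrs_fix
    have hsq : q ^ 2 = s ^ 2 := by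
      have := (mem_twoSquareReps.mp hpq).trans (mem_twoSquareReps.mp hrs).symm
      dsimp only at this
      omega
    rw [Nat.pow_left_injective two_ne_zero hsq]

theorem odd_card_filter_fst_eq_zero_iff (n : ℕ) :
    Odd #{pq ∈ twoSquareReps n | pq.1 = 0} ↔ IsSquare n := by
  have hle : #{pq ∈ twoSquareReps n | pq.1 = 0} ≤ 1 := by
    refine card_le_one.mpr ?_
    rintro ⟨p, q⟩ hpq ⟨r, s⟩ hrs
    simp only [mem_filter, mem_twoSquareReps] at hpq hrs
    obtain ⟨hq, rfl⟩ := hpq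
    obtain ⟨hs, rfl⟩ := hrs
    rw [Nat.pow_left_injective two_ne_zero (by omega : q ^ 2 = s ^ 2)]
  rw [odd_card_iff_nonempty hle, filter_nonempty_iff]
  constructor
  · rintro ⟨⟨p, q⟩, hpq, rfl⟩
    exact ⟨q, by rw [← mem_twoSquareReps.mp hpq]; ring⟩
  · rintro ⟨r, rfl⟩
    exact ⟨(0, r), mem_twoSquareReps.mpr (by ring), rfl⟩

theorem odd_S2_iff {n : ℕ} (hn : n ≠ 0) : Odd (S2 n) ↔ IsSquare n ∨ ∃ a, n = 2 * a ^ 2 := by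
  have hsplit : #(twoSquareReps n) = S2 n + #{pq ∈ twoSquareReps n | pq.1 = 0} := by
    rw [S2_eq_card_filter, ← card_filter_add_card_filter_not (fun pq : ℕ × ℕ => 0 < pq.1)]
    simp only [not_lt, nonpos_iff_eq_zero]
  have hreps := odd_card_twoSquareReps_iff n
  rw [hsplit, Nat.odd_add, ← Nat.not_odd_iff_even, odd_card_filter_fst_eq_zero_iff] at hreps
  have hexcl := Nat.ne_two_mul_sq_of_isSquare hn
  tauto

/-- For every positive integer `n`, `σ₁(n) + S₂(n)` is even. -/
theorem sigma_add_S2_even (n : ℕ) (hn : 0 < n) :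
    2 ∣ ArithmeticFunction.sigma 1 n + S2 n := by
  rw [← even_iff_two_dvd, Nat.even_add, ← Nat.not_odd_iff_even, ← Nat.not_odd_iff_even,
    Nat.odd_sigma_one_iff hn.ne', odd_S2_iff hn.ne', Nat.isSquare_ordCompl_two_iff hn.ne']
end
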